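/- arXiv:2111.11227 — 8 statements merged into one kernel-verified Lean document; each statement's English description precedes it below -/
import Mathlib

section
/- For any positive integer n, the values a^3 + a for 1 ≤ a ≤ n are pairwise distinct modulo 3^⌈log₃ n⌉. -/
theorem stmt_0 (n : ℕ) (hn : 0 < n) (a b : ℕ)
    (ha : 1 ≤ a) (han : a ≤ n) (hb : 1 ≤ b) (hbn : b ≤ n)
    (h : a ^ 3 + a ≡ b ^ 3 + b [MOD 3 ^ (⌈Real.logb 3 n⌉₊)]) :
    a = b := by
  set k := ⌈Real.logb 3 (n : ℝ)⌉₊ with hk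
  -- n ≤ 3 ^ k
  have hle : n ≤ 3 ^ k := by
    have h1 : (n : ℝ) ≤ 3 ^ (k : ℝ) := by
      have h0 : (0 : ℝ) < n := by exact_mod_cast hn
      have := Real.rpow_logb (x := (n : ℝ)) (b := 3) (by norm_num) (by norm_num) h0
      calc (n : ℝ) = (3 : ℝ) ^ Real.logb 3 (n : ℝ) := this.symm
        _ ≤ 3 ^ (k : ℝ) :=
          Real.rpow_le_rpow_of_exponent_le (by norm_num) (Nat.le_ceil _)
    have : (n : ℝ) ≤ ((3 ^ k : ℕ) : ℝ) := by
      rw [Real.rpow_natCast] at h1; push_cast; exact h1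
    exact_mod_cast this
  -- pass to ℤ
  have hz : (3 ^ k : ℤ) ∣ ((a : ℤ) ^ 3 + a) - ((b : ℤ) ^ 3 + b) := by
    have := (Int.natCast_modEq_iff.mpr ?_ : ((a ^ 3 + a : ℕ) : ℤ) ≡ ((b ^ 3 + b : ℕ) : ℤ) [ZMOD (3 ^ k : ℕ)])
    · have := Int.ModEq.dvd this.symm
      push_cast at this ⊢
      convert this using 1 <;> push_cast <;> ring
    · exact h
  have hfac : ((a : ℤ) ^ 3 + a) - ((b : ℤ) ^ 3 + b)
      = ((a : ℤ) - b) * ((a : ℤ) ^ 2 + a * b + b ^ 2 + 1) := by ring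
  rw [hfac] at hz
  -- 3 does not divide the second factor
  have hnd : ¬ (3 : ℤ) ∣ ((a : ℤ) ^ 2 + a * b + b ^ 2 + 1) := by
    intro hd
    have : ((((a : ℤ) ^ 2 + a * b + b ^ 2 + 1) : ℤ) : ZMod 3) = 0 := by
      exact_mod_cast (ZMod.intCast_zmod_eq_zero_iff_dvd _ 3).mpr hd
    push_cast at this
    revert this
    have : ∀ x y : ZMod 3, x ^ 2 + x * y + y ^ 2 + 1 ≠ 0 := by decide
    exact this _ _
  have hcop : IsCoprime ((3 : ℤ) ^ k) ((a : ℤ) ^ 2 + a * b + b ^ 2 + 1) := by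
    apply IsCoprime.pow_left
    exact Int.prime_three.coprime_iff_not_dvd.mpr hnd
  have hdvd : (3 ^ k : ℤ) ∣ ((a : ℤ) - b) := hcop.dvd_of_dvd_mul_right hz
  have habs : |(a : ℤ) - b| < 3 ^ k := by
    have h3 : (n : ℤ) ≤ 3 ^ k := by exact_mod_cast hle
    rw [abs_sub_lt_iff]
    constructor <;> [skip; skip] <;>
      · have := han; have := hbn; have := ha; have := hb; omega
  have : (a : ℤ) - b = 0 := by
    rcases hdvd with ⟨c, hc⟩
    by_contra hne
    have : (3 : ℤ) ^ k ≤ |(a : ℤ) - b| := by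
      rw [hc]
      have hc0 : c ≠ 0 := by rintro rfl; simp at hc; exact hne (by omega)
      calc (3:ℤ)^k = 3^k * 1 := by ring
        _ ≤ 3^k * |c| :=
          mul_le_mul_of_nonneg_left (Int.one_le_abs hc0) (by positivity)
        _ = |3^k| * |c| := by rw [abs_of_nonneg (by positivity : (0:ℤ) ≤ 3^k)]
        _ = |3^k * c| := (abs_mul _ _).symm
    omega
  omega
end

section
/- Let p ≥ 5 be a prime with p ≡ 1 mod 4 and δ an integer not divisible by p. Then the number of x with 1 ≤ x ≤ (p-1)/2 such that p divides δ²x²+4 is exactly 1, the number with (δ²x²+4/p) = +1 is (p-5)/4, and the number with (δ²x²+4/p) = -1 is (p-1)/4. -/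
/-!
For `u, a ≠ 0` in a finite field of odd characteristic, `∑ z, χ (u z² + a) = -χ u`: the number of
square roots of `y` is `1 + χ y`, `∑ y, χ (y + a) = 0`, and the substitution `y = -a x` turns
`∑ y, χ y χ (y + a)` into `χ (-1) J(χ, χ) = χ (-1) (-χ (-1)) = -1`.
In `ZMod p` the residues `0, ±1, …, ±(p-1)/2` are all distinct, so for `u = δ²`, `a = 4` half of
that sum gives `∑_{x=1}^{(p-1)/2} (δ²x²+4 / p) = -1`, and the same folding shows that `δ²x² + 4`
vanishes for exactly `(1 + (-4δ² / p)) / 2 = 1` of these `x` when `p ≡ 1 mod 4`. The remaining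
`(p-3)/2` values of `x` split into `N₊` and `N₋` with `N₊ - N₋ = -1`.
-/

open Finset

section QuadraticChar

variable {F : Type*} [Field F] [Fintype F] [DecidableEq F]

theorem quadraticChar_sum_mul_add (hF : ringChar F ≠ 2) {a : F} (ha : a ≠ 0) :
    ∑ y, quadraticChar F y * quadraticChar F (y + a) = -1 := by
  set χ := quadraticChar F
  have hJ : ∑ x, χ x * χ (1 - x) = -χ (-1) := by
    simpa only [jacobiSum, (quadraticChar_isQuadratic F).inv] using
      jacobiSum_nontrivial_inv (quadraticChar_ne_one hF)
  calc ∑ y, χ y * χ (y + a)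
      = ∑ x, χ (-a * x) * χ (-a * x + a) :=
        (Equiv.sum_comp (Equiv.mulLeft₀ (-a) (neg_ne_zero.2 ha)) _).symm
    _ = ∑ x, χ (-1) * (χ a ^ 2 * (χ x * χ (1 - x))) := by
        refine sum_congr rfl fun x _ => ?_
        rw [show -a * x + a = a * (1 - x) by ring, show -a * x = -1 * a * x by ring,
          map_mul, map_mul, map_mul]
        ring
    _ = -1 := by
        rw [← mul_sum, ← mul_sum, hJ, quadraticChar_sq_one ha, one_mul, mul_neg, ← sq,
          quadraticChar_sq_one (neg_ne_zero.2 one_ne_zero)]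

theorem quadraticChar_sum_sq_add (hF : ringChar F ≠ 2) {a : F} (ha : a ≠ 0) :
    ∑ z, quadraticChar F (z ^ 2 + a) = -1 := by
  set χ := quadraticChar F
  have hshift : ∑ y, χ (y + a) = 0 :=
    (Equiv.sum_comp (Equiv.addRight a) (fun y => χ y)).trans (quadraticChar_sum_zero hF)
  calc ∑ z, χ (z ^ 2 + a)
      = ∑ y, ∑ z with z ^ 2 = y, χ (z ^ 2 + a) := (sum_fiberwise _ _ _).symm
    _ = ∑ y, (χ y + 1) * χ (y + a) := by
        refine sum_congr rfl fun y _ => ?_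
        rw [sum_congr rfl fun z hz => by rw [(mem_filter.1 hz).2], sum_const, nsmul_eq_mul,
          ← quadraticChar_card_sqrts hF y, Set.toFinset_ofPred]
    _ = -1 := by
        rw [sum_congr rfl fun y _ => add_one_mul (χ y) _, sum_add_distrib,
          quadraticChar_sum_mul_add hF ha, hshift, add_zero]

theorem quadraticChar_sum_mul_sq_add (hF : ringChar F ≠ 2) {u a : F} (hu : u ≠ 0) (ha : a ≠ 0) :
    ∑ z, quadraticChar F (u * z ^ 2 + a) = -quadraticChar F u := by
  calc ∑ z, quadraticChar F (u * z ^ 2 + a)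
      = ∑ z, quadraticChar F u * quadraticChar F (z ^ 2 + a / u) := by
        refine sum_congr rfl fun z _ => ?_
        rw [← map_mul, mul_add, mul_div_cancel₀ _ hu]
    _ = -quadraticChar F u := by
        rw [← mul_sum, quadraticChar_sum_sq_add hF (div_ne_zero ha hu), mul_neg_one]

theorem quadraticChar_card_roots_mul_sq_add (hF : ringChar F ≠ 2) {u : F} (hu : u ≠ 0) (a : F) :
    (#{z | u * z ^ 2 + a = 0} : ℤ) = quadraticChar F (-a * u) + 1 := by
  rw [show -a * u = -a / u * u ^ 2 by field_simp, map_mul, quadraticChar_sq_one' hu, mul_one,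
    ← quadraticChar_card_sqrts hF, Set.toFinset_ofPred]
  congr 3
  ext z
  rw [eq_div_iff hu, add_eq_zero_iff_eq_neg, mul_comm]

end QuadraticChar

theorem ZMod.sum_eq_add_two_nsmul_sum_Icc {M : Type*} [AddCommMonoid M] {n : ℕ} [NeZero n]
    (hn : Odd n) {f : ZMod n → M} (hf : f.Even) :
    ∑ z, f z = f 0 + 2 • ∑ x ∈ Icc 1 (n / 2), f x := by
  obtain ⟨h, rfl⟩ := hn
  have hval : ∑ z, f z = ∑ k ∈ range (2 * h + 1), f k :=
    sum_nbij' ZMod.val Nat.cast (fun z _ => mem_range.2 (ZMod.val_lt z)) (by simp)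
      (fun z _ => ZMod.natCast_zmod_val z) (fun k hk => ZMod.val_cast_of_lt (mem_range.1 hk))
      (fun z _ => by rw [ZMod.natCast_zmod_val])
  have hlow : ∑ k ∈ range (h + 1), f k = f 0 + ∑ x ∈ Icc 1 h, f x := by
    rw [range_eq_Ico, sum_eq_sum_Ico_succ_bot h.succ_pos, zero_add, Nat.succ_eq_add_one,
      Ico_add_one_right_eq_Icc, Nat.cast_zero]
  have hhigh : ∑ k ∈ Ico (h + 1) (2 * h + 1), f k = ∑ x ∈ Icc 1 h, f x := by
    have := sum_Ico_reflect (fun k : ℕ => f k) 1 (by omega : h + 1 ≤ 2 * h + 1 + 1)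
    rw [show 2 * h + 1 + 1 - (h + 1) = h + 1 by omega,
      show 2 * h + 1 + 1 - 1 = 2 * h + 1 by omega, Ico_add_one_right_eq_Icc] at this
    rw [← this]
    refine sum_congr rfl fun x hx => ?_
    rw [Nat.cast_sub (by simp at hx; omega), ZMod.natCast_self, zero_sub, hf]
  rw [hval, ← sum_range_add_sum_Ico _ (by omega : h + 1 ≤ 2 * h + 1), hlow, hhigh,
    show (2 * h + 1) / 2 = h by omega, two_nsmul, add_assoc]

namespace legendreSym

variable (p : ℕ) [Fact p.Prime]

theorem two_mul_sum_Icc_mul_sq_add (hp : p ≠ 2) {b a : ℤ} (hb : (b : ZMod p) ≠ 0)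
    (ha : (a : ZMod p) ≠ 0) :
    2 * ∑ x ∈ Icc 1 (p / 2), legendreSym p (b * (x : ℤ) ^ 2 + a) =
      -legendreSym p b - legendreSym p a := by
  have hF : ringChar (ZMod p) ≠ 2 := by rwa [ZMod.ringChar_zmod_n]
  have hsym := ZMod.sum_eq_add_two_nsmul_sum_Icc ((Fact.out : p.Prime).odd_of_ne_two hp)
    (f := fun z => quadraticChar (ZMod p) (b * z ^ 2 + a)) (fun z => by simp only [neg_sq])
  rw [quadraticChar_sum_mul_sq_add hF hb ha, zero_pow two_ne_zero, mul_zero, zero_add,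
    nsmul_eq_mul, Nat.cast_ofNat] at hsym
  simp only [legendreSym, Int.cast_add, Int.cast_mul, Int.cast_pow, Int.cast_natCast]
  linarith

theorem two_mul_card_Icc_filter_dvd_mul_sq_add (hp : p ≠ 2) {b a : ℤ} (hb : (b : ZMod p) ≠ 0)
    (ha : (a : ZMod p) ≠ 0) :
    2 * (#{x ∈ Icc 1 (p / 2) | (p : ℤ) ∣ b * ((x : ℕ) : ℤ) ^ 2 + a} : ℤ) =
      legendreSym p (-a * b) + 1 := by
  have hF : ringChar (ZMod p) ≠ 2 := by rwa [ZMod.ringChar_zmod_n]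
  have hsym := ZMod.sum_eq_add_two_nsmul_sum_Icc ((Fact.out : p.Prime).odd_of_ne_two hp)
    (f := fun z => if (b : ZMod p) * z ^ 2 + a = 0 then 1 else 0) (fun z => by simp only [neg_sq])
  simp only [sum_boole, zero_pow two_ne_zero, mul_zero, zero_add, ha, if_false,
    smul_eq_mul] at hsym
  simp only [legendreSym, ← ZMod.intCast_zmod_eq_zero_iff_dvd, Int.cast_add, Int.cast_mul,
    Int.cast_pow, Int.cast_natCast, Int.cast_neg, ← quadraticChar_card_roots_mul_sq_add hF hb]
  exact_mod_cast hsym.symm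

end legendreSym

section Trichotomy

variable {α : Type*} {s : Finset α} {g : α → ℤ}

theorem Finset.sum_eq_card_filter_eq_one_sub_card_filter_eq_neg_one
    (hg : ∀ x ∈ s, g x = 0 ∨ g x = 1 ∨ g x = -1) :
    ∑ x ∈ s, g x = #{x ∈ s | g x = 1} - #{x ∈ s | g x = -1} := by
  rw [card_filter, card_filter, Nat.cast_sum, Nat.cast_sum, ← sum_sub_distrib]
  refine sum_congr rfl fun x hx => ?_
  rcases hg x hx with h | h | h <;> simp [h]

theorem Finset.card_eq_card_filter_eq_zero_add_card_filter_eq_one_add_card_filter_eq_neg_one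
    (hg : ∀ x ∈ s, g x = 0 ∨ g x = 1 ∨ g x = -1) :
    #s = #{x ∈ s | g x = 0} + #{x ∈ s | g x = 1} + #{x ∈ s | g x = -1} := by
  rw [card_filter, card_filter, card_filter, ← sum_add_distrib, ← sum_add_distrib,
    card_eq_sum_ones]
  refine sum_congr rfl fun x hx => ?_
  rcases hg x hx with h | h | h <;> simp [h]

end Trichotomy

open Finset in
theorem stmt_5_general (p : ℕ) (hp : p.Prime) (hp1 : p % 4 = 1)
    (δ : ℤ) (hδ : ¬ (p : ℤ) ∣ δ) :
    ((Finset.Icc 1 ((p - 1) / 2)).filter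
        fun x : ℕ => (p : ℤ) ∣ δ ^ 2 * (x : ℤ) ^ 2 + 4).card = 1 ∧
    ((Finset.Icc 1 ((p - 1) / 2)).filter
        fun x : ℕ => @legendreSym p ⟨hp⟩ (δ ^ 2 * (x : ℤ) ^ 2 + 4) = 1).card = (p - 5) / 4 ∧
    ((Finset.Icc 1 ((p - 1) / 2)).filter
        fun x : ℕ => @legendreSym p ⟨hp⟩ (δ ^ 2 * (x : ℤ) ^ 2 + 4) = -1).card = (p - 1) / 4 := by
  have : Fact p.Prime := ⟨hp⟩
  have hp2 : p ≠ 2 := by omega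
  have hδ0 : (δ : ZMod p) ≠ 0 := by rwa [Ne, ZMod.intCast_zmod_eq_zero_iff_dvd]
  have h2 : ((2 : ℤ) : ZMod p) ≠ 0 := by
    exact_mod_cast Ring.two_ne_zero (by rwa [ZMod.ringChar_zmod_n] : ringChar (ZMod p) ≠ 2)
  have hδ2 : ((δ ^ 2 : ℤ) : ZMod p) ≠ 0 := by exact_mod_cast pow_ne_zero 2 hδ0
  have h4 : ((4 : ℤ) : ZMod p) ≠ 0 := by exact_mod_cast pow_ne_zero 2 h2
  have hsum := legendreSym.two_mul_sum_Icc_mul_sq_add p hp2 hδ2 h4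
  have hzero := legendreSym.two_mul_card_Icc_filter_dvd_mul_sq_add p hp2 hδ2 h4
  have hleg4 : legendreSym p 4 = 1 := by simpa using legendreSym.sq_one' p h2
  rw [legendreSym.sq_one' p hδ0, hleg4] at hsum
  rw [show -4 * δ ^ 2 = -1 * (2 * δ) ^ 2 by ring, legendreSym.mul, legendreSym.at_neg_one hp2,
    ZMod.χ₄_nat_one_mod_four hp1,
    legendreSym.sq_one' p (by rw [Int.cast_mul]; exact mul_ne_zero h2 hδ0)] at hzero
  have htri : ∀ x ∈ Icc 1 (p / 2), legendreSym p (δ ^ 2 * (x : ℤ) ^ 2 + 4) = 0 ∨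
      legendreSym p (δ ^ 2 * (x : ℤ) ^ 2 + 4) = 1 ∨ legendreSym p (δ ^ 2 * (x : ℤ) ^ 2 + 4) = -1 :=
    fun x _ => quadraticChar_isQuadratic _ _
  have hcard := card_eq_card_filter_eq_zero_add_card_filter_eq_one_add_card_filter_eq_neg_one htri
  have hdiff := sum_eq_card_filter_eq_one_sub_card_filter_eq_neg_one htri
  simp only [← ZMod.intCast_zmod_eq_zero_iff_dvd, ← legendreSym.eq_zero_iff] at hzero ⊢
  rw [Nat.card_Icc] at hcard
  rw [show (p - 1) / 2 = p / 2 by omega]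
  omega

open Finset in
theorem stmt_5 (p : ℕ) (hp : p.Prime) (hp5 : 5 ≤ p) (hp1 : p % 4 = 1)
    (δ : ℤ) (hδ : ¬ (p : ℤ) ∣ δ) :
    ((Finset.Icc 1 ((p - 1) / 2)).filter
        fun x : ℕ => (p : ℤ) ∣ δ ^ 2 * (x : ℤ) ^ 2 + 4).card = 1 ∧
    ((Finset.Icc 1 ((p - 1) / 2)).filter
        fun x : ℕ => @legendreSym p ⟨hp⟩ (δ ^ 2 * (x : ℤ) ^ 2 + 4) = 1).card = (p - 5) / 4 ∧
    ((Finset.Icc 1 ((p - 1) / 2)).filter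
        fun x : ℕ => @legendreSym p ⟨hp⟩ (δ ^ 2 * (x : ℤ) ^ 2 + 4) = -1).card = (p - 1) / 4 :=
  stmt_5_general p hp hp1 δ hδ
end

section
/- Let p ≥ 5 be a prime and δ an integer not divisible by p. Define ℓ_p(δ) as the smallest positive integer x such that the Legendre symbol of (-3δ²x² - 12) mod p is 0 or 1. Then ℓ_p(δ) ≤ L_p, where L_p = (p+3)/4 if p ≡ 1 mod 12, (p-1)/4 if p ≡ 5 mod 12, (p+5)/4 if p ≡ 7 mod 12, and (p+1)/4 if p ≡ 11 mod 12. -/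
open Finset

lemma phi_eq {F : Type*} [Field F] {s t : F} (hs : s ≠ 0) (ht : t ≠ 0)
    (h : s - s⁻¹ = t - t⁻¹) : s = t ∨ s = -t⁻¹ := by
  have h1 : (s - t) * (s * t + 1) = 0 := by
    field_simp at h
    linear_combination h
  rcases mul_eq_zero.mp h1 with h2 | h2
  · left; exact sub_eq_zero.mp h2
  · right
    have h3 : s * t = -1 := by linear_combination h2
    field_simp
    linear_combination h3

section counting
variable {p : ℕ} [hFp : Fact p.Prime]

private def fib (p : ℕ) [Fact p.Prime] (y : ZMod p) : Finset (ZMod p) :=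
  univ.filter (fun t => t ≠ 0 ∧ t - t⁻¹ = y)

lemma mem_fib {y t : ZMod p} : t ∈ fib p y ↔ t ≠ 0 ∧ t - t⁻¹ = y := by
  simp [fib]

lemma fib_card_le_two (y : ZMod p) : (fib p y).card ≤ 2 := by
  rcases (fib p y).eq_empty_or_nonempty with he | ⟨t0, ht0⟩
  · simp [he]
  · have h0 := mem_fib.mp ht0
    have hsub : fib p y ⊆ {t0, -t0⁻¹} := by
      intro s hs
      have hs' := mem_fib.mp hs
      rcases phi_eq hs'.1 h0.1 (hs'.2.trans h0.2.symm) with h | h <;> simp [h]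
    exact (card_le_card hsub).trans ((card_insert_le _ _).trans (by simp))

lemma fib_card_le_one {y : ZMod p} (hy : y ^ 2 + 4 = 0) : (fib p y).card ≤ 1 := by
  refine card_le_one.mpr fun a ha b hb => ?_
  have ha' := mem_fib.mp ha
  have hb' := mem_fib.mp hb
  rcases phi_eq ha'.1 hb'.1 (ha'.2.trans hb'.2.symm) with h | h
  · exact h
  · have hsq : (b + b⁻¹) ^ 2 = 0 := by
      have hbb : b * b⁻¹ = 1 := mul_inv_cancel₀ hb'.1
      calc (b + b⁻¹) ^ 2 = (b - b⁻¹) ^ 2 + 4 := by linear_combination 4 * hbb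
      _ = y ^ 2 + 4 := by rw [hb'.2]
      _ = 0 := hy
    have hz : b + b⁻¹ = 0 := by
      exact pow_eq_zero_iff (n := 2) (by norm_num) |>.mp hsq
    rw [h]
    exact neg_eq_of_add_eq_zero_left hz

lemma Q_lower (Q : Finset (ZMod p)) (hQ : ∀ y : ZMod p, IsSquare (y ^ 2 + 4) → y ∈ Q) :
    p - 1 ≤ ∑ y ∈ Q, (fib p y).card := by
  have hsub : univ.filter (fun t : ZMod p => t ≠ 0) ⊆ Q.biUnion (fib p) := by
    intro t ht
    simp only [mem_filter, mem_univ, true_and] at ht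
    refine mem_biUnion.mpr ⟨t - t⁻¹, hQ _ ⟨t + t⁻¹, ?_⟩, mem_fib.mpr ⟨ht, rfl⟩⟩
    linear_combination -4 * mul_inv_cancel₀ ht
  calc p - 1 = (univ.filter (fun t : ZMod p => t ≠ 0)).card := by
        rw [filter_ne', card_erase_of_mem (mem_univ 0), card_univ, ZMod.card]
  _ ≤ (Q.biUnion (fib p)).card := card_le_card hsub
  _ ≤ ∑ y ∈ Q, (fib p y).card := card_biUnion_le

lemma Q_lower1 (Q : Finset (ZMod p)) (hQ : ∀ y : ZMod p, IsSquare (y ^ 2 + 4) → y ∈ Q) :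
    p - 1 ≤ 2 * Q.card := by
  refine (Q_lower Q hQ).trans ?_
  calc ∑ y ∈ Q, (fib p y).card ≤ Q.card * 2 :=
        sum_le_card_nsmul Q _ 2 (fun y _ => fib_card_le_two y)
  _ = 2 * Q.card := by ring

end counting

section counting2
variable {p : ℕ} [hFp : Fact p.Prime]

lemma two_ne_zero'' (hp5 : 5 ≤ p) : (2 : ZMod p) ≠ 0 := by
  have h : ((2:ℕ) : ZMod p) ≠ 0 := by
    rw [Ne, ZMod.natCast_eq_zero_iff]
    intro h; exact absurd (Nat.le_of_dvd (by norm_num) h) (by omega)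
  simpa using h

lemma Q_lower2 (hp5 : 5 ≤ p) (h4 : p % 4 = 1) (Q : Finset (ZMod p))
    (hQ : ∀ y : ZMod p, IsSquare (y ^ 2 + 4) → y ∈ Q) : p + 1 ≤ 2 * Q.card := by
  obtain ⟨i, hi⟩ := ZMod.exists_sq_eq_neg_one_iff.mpr (by omega : p % 4 ≠ 3)
  have hi2 : i ^ 2 = -1 := by rw [pow_two]; exact hi.symm
  have hi0 : i ≠ 0 := by
    rintro rfl
    rw [zero_pow (by norm_num)] at hi2
    exact absurd hi2.symm (neg_ne_zero.mpr one_ne_zero)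
  have h2 := two_ne_zero'' hp5
  have hine : 2 * i ≠ -(2 * i) := by
    intro h
    have h4i : (2 : ZMod p) * (2 * i) = 0 := by linear_combination h
    rcases mul_eq_zero.mp h4i with h' | h'
    · exact h2 h'
    · rcases mul_eq_zero.mp h' with h'' | h''
      · exact h2 h''
      · exact hi0 h''
  have e1 : (2 * i) ^ 2 + 4 = 0 := by linear_combination 4 * hi2
  have e2 : (-(2 * i)) ^ 2 + 4 = 0 := by linear_combination 4 * hi2
  have hSQ : ({2 * i, -(2 * i)} : Finset (ZMod p)) ⊆ Q := by
    intro y hy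
    apply hQ
    have hy0 : y ^ 2 + 4 = 0 := by
      rcases mem_insert.mp hy with h | h
      · rw [h]; exact e1
      · rw [mem_singleton.mp h]; exact e2
    rw [hy0]; exact ⟨0, by ring⟩
  have hcardS : ({2 * i, -(2 * i)} : Finset (ZMod p)).card = 2 := card_pair hine
  have hQ2 : 2 ≤ Q.card := hcardS ▸ card_le_card hSQ
  have hsplit : ∑ y ∈ Q \ ({2 * i, -(2 * i)} : Finset (ZMod p)), (fib p y).card
      + ∑ y ∈ ({2 * i, -(2 * i)} : Finset (ZMod p)), (fib p y).card
      = ∑ y ∈ Q, (fib p y).card := sum_sdiff hSQ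
  have hS_le : ∑ y ∈ ({2 * i, -(2 * i)} : Finset (ZMod p)), (fib p y).card ≤ 2 := by
    rw [sum_pair hine]
    exact add_le_add (fib_card_le_one e1) (fib_card_le_one e2)
  have hQS_le : ∑ y ∈ Q \ ({2 * i, -(2 * i)} : Finset (ZMod p)), (fib p y).card
      ≤ (Q.card - 2) * 2 := by
    have h := sum_le_card_nsmul (Q \ ({2 * i, -(2 * i)} : Finset (ZMod p))) _ 2
      (fun y _ => fib_card_le_two y)
    rwa [card_sdiff_of_subset hSQ, hcardS, smul_eq_mul] at h
  have hmain := Q_lower Q hQ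
  omega

lemma B_upper (hp5 : 5 ≤ p) (B : Finset (ZMod p))
    (hB : ∀ y ∈ B, IsSquare (y ^ 2 + 4) ∧ y ^ 2 + 4 ≠ 0) :
    2 * B.card ≤ (univ.filter (fun t : ZMod p => t ≠ 0 ∧ t ^ 2 ≠ -1)).card := by
  have h2 := two_ne_zero'' hp5
  have hfib2 : ∀ y ∈ B, 2 ≤ (fib p y).card := by
    intro y hy
    obtain ⟨⟨s, hs⟩, hne⟩ := hB y hy
    have hs0 : s ≠ 0 := by rintro rfl; rw [mul_zero] at hs; exact hne hs
    have hprod : (y + s) / 2 * ((y - s) / 2) = -1 := by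
      field_simp
      linear_combination hs
    have ht1 : (y + s) / 2 ≠ 0 := by
      intro h; rw [h, zero_mul] at hprod
      exact absurd hprod.symm (neg_ne_zero.mpr one_ne_zero)
    have ht2 : (y - s) / 2 ≠ 0 := by
      intro h; rw [h, mul_zero] at hprod
      exact absurd hprod.symm (neg_ne_zero.mpr one_ne_zero)
    have htne : (y + s) / 2 ≠ (y - s) / 2 := by
      intro h
      apply hs0
      have hss : s + s = 0 := by
        field_simp at h
        linear_combination h
      have h2s : (2 : ZMod p) * s = 0 := by linear_combination hss
      exact (mul_eq_zero.mp h2s).resolve_left h2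
    have hinv1 : ((y + s) / 2)⁻¹ = -((y - s) / 2) := by
      apply inv_eq_of_mul_eq_one_right
      rw [mul_neg, hprod]; ring
    have hinv2 : ((y - s) / 2)⁻¹ = -((y + s) / 2) := by
      apply inv_eq_of_mul_eq_one_right
      rw [mul_neg, mul_comm, hprod]; ring
    have m1 : (y + s) / 2 ∈ fib p y := by
      refine mem_fib.mpr ⟨ht1, ?_⟩
      rw [hinv1]
      field_simp
      ring
    have m2 : (y - s) / 2 ∈ fib p y := by
      refine mem_fib.mpr ⟨ht2, ?_⟩
      rw [hinv2]
      field_simp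
      ring
    have hpair : ({(y + s) / 2, (y - s) / 2} : Finset (ZMod p)) ⊆ fib p y := by
      intro t ht
      rcases mem_insert.mp ht with h | h
      · rwa [h]
      · rw [mem_singleton.mp h]; exact m2
    calc 2 = ({(y + s) / 2, (y - s) / 2} : Finset (ZMod p)).card := (card_pair htne).symm
    _ ≤ _ := card_le_card hpair
  have hdisj : ∀ y1 ∈ B, ∀ y2 ∈ B, y1 ≠ y2 → Disjoint (fib p y1) (fib p y2) := by
    intro y1 _ y2 _ hne
    refine disjoint_left.mpr fun t ht1 ht2 => hne ?_
    rw [← (mem_fib.mp ht1).2, (mem_fib.mp ht2).2]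
  have hsub : B.biUnion (fib p) ⊆ univ.filter (fun t : ZMod p => t ≠ 0 ∧ t ^ 2 ≠ -1) := by
    intro t ht
    obtain ⟨y, hy, htf⟩ := mem_biUnion.mp ht
    obtain ⟨ht0, hty⟩ := mem_fib.mp htf
    refine mem_filter.mpr ⟨mem_univ _, ht0, fun hti => ?_⟩
    apply (hB y hy).2
    have hinv : t⁻¹ = -t := by
      apply inv_eq_of_mul_eq_one_right
      linear_combination -hti
    rw [← hty, hinv]
    linear_combination 4 * hti
  calc 2 * B.card = ∑ _y ∈ B, 2 := by rw [sum_const, smul_eq_mul, mul_comm]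
  _ ≤ ∑ y ∈ B, (fib p y).card := sum_le_sum hfib2
  _ = (B.biUnion (fib p)).card := (card_biUnion hdisj).symm
  _ ≤ _ := card_le_card hsub

lemma filter_le1 : (univ.filter (fun t : ZMod p => t ≠ 0 ∧ t ^ 2 ≠ -1)).card ≤ p - 1 := by
  have hsub : univ.filter (fun t : ZMod p => t ≠ 0 ∧ t ^ 2 ≠ -1)
      ⊆ univ.filter (fun t : ZMod p => t ≠ 0) := by
    intro t ht
    simp only [mem_filter] at ht ⊢
    exact ⟨ht.1, ht.2.1⟩
  calc _ ≤ (univ.filter (fun t : ZMod p => t ≠ 0)).card := card_le_card hsub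
  _ = p - 1 := by rw [filter_ne', card_erase_of_mem (mem_univ 0), card_univ, ZMod.card]

lemma filter_le2 (hp5 : 5 ≤ p) (h4 : p % 4 = 1) :
    (univ.filter (fun t : ZMod p => t ≠ 0 ∧ t ^ 2 ≠ -1)).card ≤ p - 3 := by
  obtain ⟨i, hi⟩ := ZMod.exists_sq_eq_neg_one_iff.mpr (by omega : p % 4 ≠ 3)
  have hi2 : i ^ 2 = -1 := by rw [pow_two]; exact hi.symm
  have hi0 : i ≠ 0 := by
    rintro rfl
    rw [zero_pow (by norm_num)] at hi2
    exact absurd hi2.symm (neg_ne_zero.mpr one_ne_zero)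
  have h2 := two_ne_zero'' hp5
  have hii : i ≠ -i := by
    intro h
    have h2i : (2 : ZMod p) * i = 0 := by linear_combination h
    exact hi0 ((mul_eq_zero.mp h2i).resolve_left h2)
  have hdisj : Disjoint (univ.filter (fun t : ZMod p => t ≠ 0 ∧ t ^ 2 ≠ -1))
      ({0, i, -i} : Finset (ZMod p)) := by
    rw [disjoint_right]
    intro t ht hmem
    have ht' := (mem_filter.mp hmem)
    rcases mem_insert.mp ht with h | h
    · exact ht'.2.1 h
    · rcases mem_insert.mp h with h' | h'
      · exact ht'.2.2 (by rw [h']; exact hi2)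
      · exact ht'.2.2 (by rw [mem_singleton.mp h']; linear_combination hi2)
  have hcard3 : ({0, i, -i} : Finset (ZMod p)).card = 3 := by
    have h0ni : (0 : ZMod p) ∉ ({i, -i} : Finset (ZMod p)) := by
      simp only [mem_insert, mem_singleton]
      push_neg
      exact ⟨fun h => hi0 h.symm, fun h => hi0 (neg_eq_zero.mp h.symm)⟩
    rw [card_insert_of_notMem h0ni, card_pair hii]
  have key : (univ.filter (fun t : ZMod p => t ≠ 0 ∧ t ^ 2 ≠ -1)).card + 3 ≤ p := by
    calc _ = ((univ.filter (fun t : ZMod p => t ≠ 0 ∧ t ^ 2 ≠ -1))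
        ∪ ({0, i, -i} : Finset (ZMod p))).card := by
          rw [card_union_of_disjoint hdisj, hcard3]
    _ ≤ (univ : Finset (ZMod p)).card := card_le_card (subset_univ _)
    _ = p := by rw [card_univ, ZMod.card]
  omega

lemma nonsq_mul {a b : ZMod p} (ha : a ≠ 0) (hb : b ≠ 0) (hna : ¬IsSquare a)
    (hnb : ¬IsSquare b) : IsSquare (a * b) := by
  have h1 : quadraticChar (ZMod p) a = -1 := quadraticChar_neg_one_iff_not_isSquare.mpr hna
  have h2 : quadraticChar (ZMod p) b = -1 := quadraticChar_neg_one_iff_not_isSquare.mpr hnb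
  have h3 : quadraticChar (ZMod p) (a * b) = 1 := by rw [map_mul, h1, h2]; ring
  exact (quadraticChar_one_iff_isSquare (mul_ne_zero ha hb)).mp h3

end counting2


lemma q1' : quadraticChar (ZMod 3) ((1:ℕ) : ZMod 3) = 1 := by decide
lemma q2' : quadraticChar (ZMod 3) ((2:ℕ) : ZMod 3) = -1 := by decide

section neg3
variable {p : ℕ} [hFp : Fact p.Prime]

lemma legendre_neg_three (hp5 : 5 ≤ p) : legendreSym p (-3) = legendreSym 3 p := by
  have hp2 : p ≠ 2 := by omega
  have hodd : p % 2 = 1 := Nat.Prime.eq_two_or_odd hFp.out |>.resolve_left hp2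
  haveI : Fact (Nat.Prime 3) := ⟨by norm_num⟩
  have h1 : legendreSym p (-3) = legendreSym p (-1) * legendreSym p 3 := by
    rw [← legendreSym.mul]; norm_num
  have h2 : legendreSym 3 p = (-1) ^ (p / 2 * (3 / 2)) * legendreSym p 3 :=
    legendreSym.quadratic_reciprocity' hp2 (by norm_num)
  have h3 : legendreSym p (-1) = (-1 : ℤ) ^ (p / 2) := by
    rw [legendreSym.at_neg_one hp2, ZMod.χ₄_eq_neg_one_pow hodd]
  rw [h1, h3, h2]
  norm_num [mul_assoc, ← pow_add, ← two_mul, pow_mul]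

lemma isSquare_neg_three_iff (hp5 : 5 ≤ p) : IsSquare (-3 : ZMod p) ↔ p % 3 = 1 := by
  haveI : Fact (Nat.Prime 3) := ⟨by norm_num⟩
  have h3ne : ((-3 : ℤ) : ZMod p) ≠ 0 := by
    rw [Ne, ZMod.intCast_zmod_eq_zero_iff_dvd]
    intro h
    have := Int.le_of_dvd (by norm_num) ((dvd_neg).mp h)
    omega
  have hiff := legendreSym.eq_one_iff p h3ne
  have hcast : ((-3 : ℤ) : ZMod p) = (-3 : ZMod p) := by push_cast; ring
  rw [hcast] at hiff
  rw [← hiff, legendre_neg_three hp5]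
  have hnd : ¬ (3 ∣ p) := fun h => by
    have := (Nat.prime_dvd_prime_iff_eq (by norm_num) hFp.out).mp h; omega
  have hp3 : p % 3 = 1 ∨ p % 3 = 2 := by omega
  have hval : legendreSym 3 p = quadraticChar (ZMod 3) (((p % 3 : ℕ) : ZMod 3)) := by
    rw [legendreSym, ZMod.natCast_mod]
    norm_cast
  rcases hp3 with h | h <;> rw [hval, h]
  · rw [q1']
    simp
  · rw [q2']; norm_num
end neg3


theorem stmt_7 (p : ℕ) (hp : p.Prime) (hp5 : 5 ≤ p) (δ : ℤ) (hδ : ¬ (p : ℤ) ∣ δ)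
    (L : ℕ)
    (hL : (p % 12 = 1 ∧ L = (p + 3) / 4) ∨ (p % 12 = 5 ∧ L = (p - 1) / 4) ∨
          (p % 12 = 7 ∧ L = (p + 5) / 4) ∨ (p % 12 = 11 ∧ L = (p + 1) / 4)) :
    sInf {x : ℕ | 0 < x ∧
        (@legendreSym p ⟨hp⟩ (-3 * δ ^ 2 * (x : ℤ) ^ 2 - 12) = 0 ∨
         @legendreSym p ⟨hp⟩ (-3 * δ ^ 2 * (x : ℤ) ^ 2 - 12) = 1)} ≤ L := by
  haveI hFp : Fact p.Prime := ⟨hp⟩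
  by_contra hcon
  push_neg at hcon
  have hd : (δ : ZMod p) ≠ 0 := fun h => hδ ((ZMod.intCast_zmod_eq_zero_iff_dvd δ p).mp h)
  have h3ne : ((3:ℕ) : ZMod p) ≠ 0 := by
    rw [Ne, ZMod.natCast_eq_zero_iff]
    intro h
    have := Nat.le_of_dvd (by norm_num) h
    omega
  have hneg3ne : (-3 : ZMod p) ≠ 0 := by
    refine neg_ne_zero.mpr ?_
    simpa using h3ne
  have hnotsq : ∀ x : ℕ, 0 < x → x ≤ L →
      ¬ IsSquare ((-3 : ZMod p) * (((δ : ZMod p) * x) ^ 2 + 4)) := by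
    intro x hx hxL hsq
    have hmem : x ∉ {x : ℕ | 0 < x ∧
        (@legendreSym p ⟨hp⟩ (-3 * δ ^ 2 * (x : ℤ) ^ 2 - 12) = 0 ∨
         @legendreSym p ⟨hp⟩ (-3 * δ ^ 2 * (x : ℤ) ^ 2 - 12) = 1)} :=
      Nat.notMem_of_lt_sInf (lt_of_le_of_lt hxL hcon)
    have hcast : ((-3 * δ ^ 2 * (x:ℤ) ^ 2 - 12 : ℤ) : ZMod p)
        = (-3 : ZMod p) * (((δ : ZMod p) * x) ^ 2 + 4) := by push_cast; ring
    rcases eq_or_ne ((-3 * δ ^ 2 * (x:ℤ) ^ 2 - 12 : ℤ) : ZMod p) 0 with h0 | h0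
    · exact hmem ⟨hx, Or.inl ((legendreSym.eq_zero_iff p _).mpr h0)⟩
    · exact hmem ⟨hx, Or.inr ((legendreSym.eq_one_iff p h0).mpr (by rw [hcast]; exact hsq))⟩
  have h2L : 2 * L < p := by
    rcases hL with ⟨h, rfl⟩ | ⟨h, rfl⟩ | ⟨h, rfl⟩ | ⟨h, rfl⟩ <;> omega
  -- the finset of values ±δ·x, x = 1..L
  set A : Finset (ZMod p) :=
    (Finset.Icc 1 L).image (fun x : ℕ => (δ : ZMod p) * x)
      ∪ (Finset.Icc 1 L).image (fun x : ℕ => -((δ : ZMod p) * x)) with hAdef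
  have hnatinj : ∀ x ∈ Finset.Icc 1 L, ∀ y ∈ Finset.Icc 1 L,
      ((x : ZMod p) = (y : ZMod p)) → x = y := by
    intro x hx y hy h
    rw [Finset.mem_Icc] at hx hy
    have := congrArg ZMod.val h
    rwa [ZMod.val_cast_of_lt (by omega), ZMod.val_cast_of_lt (by omega)] at this
  have hA1card : ((Finset.Icc 1 L).image (fun x : ℕ => (δ : ZMod p) * x)).card = L := by
    rw [Finset.card_image_of_injOn, Nat.card_Icc]
    · omega
    · intro x hx y hy h
      exact hnatinj x hx y hy (mul_left_cancel₀ hd h)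
  have hA2card : ((Finset.Icc 1 L).image (fun x : ℕ => -((δ : ZMod p) * x))).card = L := by
    rw [Finset.card_image_of_injOn, Nat.card_Icc]
    · omega
    · intro x hx y hy h
      exact hnatinj x hx y hy (mul_left_cancel₀ hd (neg_inj.mp h))
  have hsum0 : ∀ x ∈ Finset.Icc 1 L, ∀ y ∈ Finset.Icc 1 L,
      (δ : ZMod p) * x ≠ -((δ : ZMod p) * y) := by
    intro x hx y hy h
    rw [Finset.mem_Icc] at hx hy
    have hxy : ((x + y : ℕ) : ZMod p) = 0 := by
      push_cast
      have : (δ : ZMod p) * ((x : ZMod p) + y) = 0 := by linear_combination h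
      rcases mul_eq_zero.mp this with h' | h'
      · exact absurd h' hd
      · exact h'
    rw [ZMod.natCast_eq_zero_iff] at hxy
    have := Nat.le_of_dvd (by omega) hxy
    omega
  have hdisj12 : Disjoint ((Finset.Icc 1 L).image (fun x : ℕ => (δ : ZMod p) * x))
      ((Finset.Icc 1 L).image (fun x : ℕ => -((δ : ZMod p) * x))) := by
    rw [Finset.disjoint_left]
    intro z hz1 hz2
    obtain ⟨x, hx, hxz⟩ := Finset.mem_image.mp hz1
    obtain ⟨y, hy, hyz⟩ := Finset.mem_image.mp hz2
    exact hsum0 x hx y hy (hxz.trans hyz.symm)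
  have hAcard : A.card = 2 * L := by
    rw [hAdef, Finset.card_union_of_disjoint hdisj12, hA1card, hA2card]
    ring
  have hAbad : ∀ y ∈ A, ¬ IsSquare ((-3 : ZMod p) * (y ^ 2 + 4)) := by
    intro y hy
    rw [hAdef, Finset.mem_union] at hy
    rcases hy with hy | hy
    · obtain ⟨x, hx, hxz⟩ := Finset.mem_image.mp hy
      rw [Finset.mem_Icc] at hx
      rw [← hxz]
      exact hnotsq x (by omega) hx.2
    · obtain ⟨x, hx, hxz⟩ := Finset.mem_image.mp hy
      rw [Finset.mem_Icc] at hx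
      rw [← hxz]
      have := hnotsq x (by omega) hx.2
      intro hsq
      apply this
      convert hsq using 3
      ring
  -- split by p % 3
  have h3cases : p % 3 = 1 ∨ p % 3 = 2 := by
    rcases hL with ⟨h, _⟩ | ⟨h, _⟩ | ⟨h, _⟩ | ⟨h, _⟩ <;> omega
  rcases h3cases with h3 | h3
  · -- -3 is a square; all y ∈ A have y²+4 nonsquare
    obtain ⟨w, hw⟩ := (isSquare_neg_three_iff hp5).mpr h3
    have hAns : ∀ y ∈ A, ¬ IsSquare (y ^ 2 + 4) := by
      intro y hy hsq
      obtain ⟨r, hr⟩ := hsq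
      exact hAbad y hy ⟨w * r, by rw [hr, hw]; ring⟩
    have hQ : ∀ y : ZMod p, IsSquare (y ^ 2 + 4) → y ∈ (univ \ A) := by
      intro y hsq
      rw [Finset.mem_sdiff]
      exact ⟨mem_univ _, fun hy => hAns y hy hsq⟩
    have hQcard : (univ \ A).card = p - 2 * L := by
      rw [Finset.card_sdiff_of_subset (subset_univ _), card_univ, ZMod.card, hAcard]
    have hmod : p % 12 = 1 ∨ p % 12 = 7 := by
      rcases hL with ⟨h, _⟩ | ⟨h, _⟩ | ⟨h, _⟩ | ⟨h, _⟩ <;> omega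
    rcases hmod with h12 | h12
    · have hb := Q_lower2 hp5 (by omega) (univ \ A) hQ
      rw [hQcard] at hb
      have h4L : 4 * L = p + 3 := by
        rcases hL with ⟨h, rfl⟩ | ⟨h, _⟩ | ⟨h, _⟩ | ⟨h, _⟩ <;> omega
      omega
    · have hb := Q_lower1 (univ \ A) hQ
      rw [hQcard] at hb
      have h4L : 4 * L = p + 5 := by
        rcases hL with ⟨h, _⟩ | ⟨h, _⟩ | ⟨h, rfl⟩ | ⟨h, _⟩ <;> omega
      omega
  · -- -3 is a nonsquare; all y ∈ A have y²+4 a nonzero square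
    have hns : ¬ IsSquare (-3 : ZMod p) := by
      rw [isSquare_neg_three_iff hp5]
      omega
    have hB : ∀ y ∈ A, IsSquare (y ^ 2 + 4) ∧ y ^ 2 + 4 ≠ 0 := by
      intro y hy
      have hnot := hAbad y hy
      have hne : y ^ 2 + 4 ≠ 0 := fun h => hnot (by rw [h, mul_zero]; exact ⟨0, by ring⟩)
      refine ⟨?_, hne⟩
      by_contra hnsq
      exact hnot (nonsq_mul hneg3ne hne hns hnsq)
    have hb := B_upper hp5 A hB
    rw [hAcard] at hb
    have hmod : p % 12 = 5 ∨ p % 12 = 11 := by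
      rcases hL with ⟨h, _⟩ | ⟨h, _⟩ | ⟨h, _⟩ | ⟨h, _⟩ <;> omega
    rcases hmod with h12 | h12
    · have hf := filter_le2 (p := p) hp5 (by omega)
      have h4L : 4 * L = p - 1 := by
        rcases hL with ⟨h, _⟩ | ⟨h, rfl⟩ | ⟨h, _⟩ | ⟨h, _⟩ <;> omega
      omega
    · have hf := filter_le1 (p := p)
      have h4L : 4 * L = p + 1 := by
        rcases hL with ⟨h, _⟩ | ⟨h, _⟩ | ⟨h, _⟩ | ⟨h, rfl⟩ <;> omega
      omega
end

section
/- Let n be a positive integer, k = ⌈log₃ n⌉, and m = δ·p^r with δ, r positive integers, p ≥ 5 prime, p not dividing δ, and n ≤ m < 3^k < 3n. If p^r + δ·(p-1)/2 ≤ n, then there exist 1 ≤ a < b ≤ n with b³ + b ≡ a³ + a (mod m). -/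
/-!
Put `b = a + c` with `c = δ t`. Since `(a + c)³ + (a + c) - (a³ + a) = c (3a² + 3ca + c² + 1)`,
it suffices to find `1 ≤ t ≤ (p - 1) / 2` and `1 ≤ a ≤ p ^ r` with `p ^ r ∣ 3a² + 3ca + c² + 1`;
then `b ≤ p ^ r + δ (p - 1) / 2 ≤ n`. The discriminant of this quadratic in `a` is `-3 (c² + 4)`,
which is the nonzero square `9 s²` as soon as `c ≡ ± w (mod p)` for a point `(w, s)` with
`w, s ≠ 0` on the conic `w² + 3 s² = -4` over `𝔽_p`. Such a point exists for every `p ≥ 5`, and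
the resulting simple root modulo `p` lifts to a root modulo `p ^ r` by Hensel's lemma.
-/

open Polynomial

theorem FiniteField.exists_sq_add_three_mul_sq_eq_neg_four {F : Type*} [Field F] [Fintype F]
    (hF : ringChar F ≠ 2) (h3 : (3 : F) ≠ 0) :
    ∃ w s : F, w ≠ 0 ∧ s ≠ 0 ∧ w ^ 2 + 3 * s ^ 2 = -4 := by
  have h2 : (2 : F) ≠ 0 := Ring.two_ne_zero hF
  by_cases hi : IsSquare (-1 : F)
  · obtain ⟨i, hi⟩ := hi
    have hi0 : i ≠ 0 := by rintro rfl; simp at hi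
    exact ⟨i, i, hi0, hi0, by linear_combination -4 * hi⟩
  by_cases hd : IsSquare (-3 : F)
  · obtain ⟨d, hd⟩ := hd
    have hd0 : d ≠ 0 := by rintro rfl; exact h3 (by linear_combination -hd)
    -- in characteristic 5, `-1 = 2 ^ 2` would be a square
    have h5 : (5 : F) ≠ 0 := fun h5 => hi ⟨2, by linear_combination -h5⟩
    refine ⟨3 / 2, 5 / (2 * d), div_ne_zero h3 h2, by simp [h5, hd0, h2], ?_⟩
    field_simp
    linear_combination -25 * hd
  -- the conic has a point; neither coordinate vanishes, as `-1` and `-3` are not squares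
  obtain ⟨w, s, hws⟩ := exists_root_sum_quadratic (f := X ^ 2) (g := C 3 * X ^ 2 + C 4)
    (degree_X_pow 2) (by compute_degree!) (odd_card_of_char_ne_two hF)
  simp only [eval_X, eval_pow, eval_add, eval_mul, eval_C] at hws
  refine ⟨w, s, ?_, ?_, by linear_combination hws⟩
  · rintro rfl
    exact hd ⟨3 * s / 2, by field_simp; linear_combination -hws⟩
  · rintro rfl
    exact hi ⟨w / 2, by field_simp; linear_combination -hws⟩

theorem PadicInt.norm_lt_one_iff_toZMod_eq_zero {p : ℕ} [Fact p.Prime] (x : ℤ_[p]) :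
    ‖x‖ < 1 ↔ toZMod x = 0 := by
  rw [← mem_nonunits, ← IsLocalRing.mem_maximalIdeal, ← ker_toZMod, RingHom.mem_ker]

theorem ZMod.exists_aeval_eq_zero_of_simple_root {p : ℕ} [Fact p.Prime] {F : ℤ[X]}
    {a₀ : ZMod p} (h : aeval a₀ F = 0) (h' : aeval a₀ (derivative F) ≠ 0) (r : ℕ) :
    ∃ x : ZMod (p ^ r), aeval x F = 0 := by
  set a : ℤ_[p] := (a₀.val : ℤ_[p])
  have hmap (G : ℤ[X]) : PadicInt.toZMod (aeval a G) = aeval a₀ G := by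
    rw [← RingHom.toIntAlgHom_coe, ← aeval_algHom_apply]
    simp [a]
  have hF : ‖aeval a F‖ < 1 := by
    rw [PadicInt.norm_lt_one_iff_toZMod_eq_zero, hmap, h]
  have hF' : ‖aeval a (derivative F)‖ = 1 := by
    refine le_antisymm (PadicInt.norm_le_one _) (not_lt.mp ?_)
    rwa [PadicInt.norm_lt_one_iff_toZMod_eq_zero, hmap]
  obtain ⟨z, hz, -⟩ := hensels_lemma (F := F) (a := a) (by rwa [hF', one_pow])
  refine ⟨PadicInt.toZModPow r z, ?_⟩
  rw [← RingHom.toIntAlgHom_coe, aeval_algHom_apply, hz, map_zero]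

theorem ZMod.exists_pos_natCast_eq {n : ℕ} [NeZero n] (x : ZMod n) :
    ∃ a : ℕ, 0 < a ∧ a ≤ n ∧ (a : ZMod n) = x :=
  ⟨(x - 1).val + 1, Nat.succ_pos _, (x - 1).val_lt, by simp⟩

theorem ZMod.exists_natCast_sq_eq_sq {n : ℕ} [NeZero n] {x : ZMod n} (hx : x ≠ 0) :
    ∃ t : ℕ, 0 < t ∧ t ≤ n / 2 ∧ (t : ZMod n) ^ 2 = x ^ 2 := by
  refine ⟨x.valMinAbs.natAbs, by simpa using hx, x.natAbs_valMinAbs_le, ?_⟩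
  rw [natCast_natAbs_valMinAbs]
  split_ifs <;> ring

/-- `c * (secantPoly c).eval a = f (a + c) - f a` for `f x = x ^ 3 + x`. -/
noncomputable def secantPoly (c : ℤ) : ℤ[X] :=
  3 * X ^ 2 + 3 * (c : ℤ[X]) * X + (c : ℤ[X]) ^ 2 + 1

section secantPoly

variable {A : Type*} [CommRing A] (c : ℤ) (x : A)

@[simp]
theorem aeval_secantPoly : aeval x (secantPoly c) = 3 * x ^ 2 + 3 * c * x + c ^ 2 + 1 := by
  simp [secantPoly, map_ofNat]

theorem derivative_secantPoly : derivative (secantPoly c) = 6 * X + 3 * (c : ℤ[X]) := by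
  simp [secantPoly, derivative_pow]
  ring

@[simp]
theorem aeval_derivative_secantPoly : aeval x (derivative (secantPoly c)) = 6 * x + 3 * c := by
  simp [derivative_secantPoly, map_ofNat]

end secantPoly

theorem exists_simple_root_secantPoly {K : Type*} [Field K] (h2 : (2 : K) ≠ 0) (h3 : (3 : K) ≠ 0)
    {c : ℤ} {w s : K} (hc : (c : K) ^ 2 = w ^ 2) (hws : w ^ 2 + 3 * s ^ 2 = -4) (hs : s ≠ 0) :
    ∃ x : K, aeval x (secantPoly c) = 0 ∧ aeval x (derivative (secantPoly c)) ≠ 0 := by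
  refine ⟨(s - c) / 2, ?_, ?_⟩
  · rw [aeval_secantPoly]
    field_simp
    linear_combination hc + hws
  · rw [aeval_derivative_secantPoly, show 6 * ((s - c) / 2) + 3 * c = 3 * s by field_simp; ring]
    exact mul_ne_zero h3 hs

theorem add_cube_add_modEq {a d t q : ℕ}
    (hq : q ∣ 3 * a ^ 2 + 3 * (d * t) * a + (d * t) ^ 2 + 1) :
    a ^ 3 + a ≡ (a + d * t) ^ 3 + (a + d * t) [MOD d * q] := by
  obtain ⟨u, hu⟩ := hq
  have h : (a + d * t) ^ 3 + (a + d * t) = a ^ 3 + a + d * q * (t * u) :=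
    calc _ = a ^ 3 + a + d * t * (3 * a ^ 2 + 3 * (d * t) * a + (d * t) ^ 2 + 1) := by ring
      _ = _ := by rw [hu]; ring
  rw [h]
  exact (Nat.add_mul_mod_self_left _ _ _).symm

theorem stmt_9_general (n m δ p r : ℕ) (hδ : 0 < δ) (hp : p.Prime) (hp5 : 5 ≤ p) (hpδ : ¬ p ∣ δ)
    (hm : m = δ * p ^ r) (hle : p ^ r + δ * ((p - 1) / 2) ≤ n) :
    ∃ a b : ℕ, 1 ≤ a ∧ a < b ∧ b ≤ n ∧ a ^ 3 + a ≡ b ^ 3 + b [MOD m] := by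
  have := Fact.mk hp
  have hchar : ringChar (ZMod p) ≠ 2 := by rw [ZMod.ringChar_zmod_n]; omega
  have h3 : (3 : ZMod p) ≠ 0 := by
    rw [← Nat.cast_ofNat, Ne, ZMod.natCast_eq_zero_iff]
    exact fun h => absurd (Nat.le_of_dvd three_pos h) (by omega)
  have hδ0 : (δ : ZMod p) ≠ 0 := by rwa [Ne, ZMod.natCast_eq_zero_iff]
  obtain ⟨w, s, hw, hs, hws⟩ := FiniteField.exists_sq_add_three_mul_sq_eq_neg_four hchar h3
  obtain ⟨t, ht0, htp, ht⟩ := ZMod.exists_natCast_sq_eq_sq (div_ne_zero hw hδ0)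
  have hc : (((δ * t : ℕ) : ℤ) : ZMod p) ^ 2 = w ^ 2 := by
    push_cast
    rw [mul_pow, ht]
    field_simp
  obtain ⟨x₀, hx₀, hx₀'⟩ :=
    exists_simple_root_secantPoly (Ring.two_ne_zero hchar) h3 hc hws hs
  obtain ⟨x, hx⟩ := ZMod.exists_aeval_eq_zero_of_simple_root hx₀ hx₀' r
  obtain ⟨a, ha0, har, rfl⟩ := ZMod.exists_pos_natCast_eq x
  have hodd : p % 2 = 1 := Nat.odd_iff.mp (hp.odd_of_ne_two (by omega))
  refine ⟨a, a + δ * t, ha0, Nat.lt_add_of_pos_right (Nat.mul_pos hδ ht0), ?_, ?_⟩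
  · have : δ * t ≤ δ * ((p - 1) / 2) := Nat.mul_le_mul_left δ (by omega)
    omega
  · rw [hm]
    apply add_cube_add_modEq
    rw [← ZMod.natCast_eq_zero_iff]
    simpa using hx

theorem stmt_9 (n k m δ p r : ℕ) (hn : 0 < n) (hk : k = ⌈Real.logb 3 n⌉₊)
    (hδ : 0 < δ) (hr : 0 < r) (hp : p.Prime) (hp5 : 5 ≤ p) (hpδ : ¬ p ∣ δ)
    (hm : m = δ * p ^ r) (h1 : n ≤ m) (h2 : m < 3 ^ k) (h3 : 3 ^ k < 3 * n)
    (hle : p ^ r + δ * ((p - 1) / 2) ≤ n) :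
    ∃ a b : ℕ, 1 ≤ a ∧ a < b ∧ b ≤ n ∧ a ^ 3 + a ≡ b ^ 3 + b [MOD m] :=
  stmt_9_general n m δ p r hδ hp hp5 hpδ hm hle
end

section
/- For every integer r ≥ 6, there exists an integer a with 1 ≤ a ≤ 2^r - 3 such that 3(a+2)² + 5 ≡ 0 (mod 2^r); consequently (a+4)³ + (a+4) ≡ a³ + a (mod 2^{r+2}). -/
lemma key_aux : ∀ r : ℕ, 6 ≤ r → ∃ x : ℤ, Odd x ∧ (2:ℤ)^r ∣ 3*x^2+5 := by
  intro r hr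
  induction r with
  | zero => omega
  | succ n ih =>
    rcases Nat.lt_or_ge n 6 with h6 | h6
    · have hn : n = 5 := by omega
      subst hn
      exact ⟨13, ⟨6, by norm_num⟩, ⟨8, by norm_num⟩⟩
    · obtain ⟨x, hx, k, hk⟩ := ih h6
      obtain ⟨q, rfl⟩ : ∃ q, n = q + 3 := ⟨n - 3, by omega⟩
      rcases Int.even_or_odd k with he | ho
      · obtain ⟨m, hm⟩ := he
        exact ⟨x, hx, ⟨m, by rw [pow_succ]; linear_combination hk + 2^(q+3) * hm⟩⟩
      · refine ⟨x + 2^(q+2), hx.add_even ⟨2^(q+1), by ring⟩, ?_⟩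
        have hxk : Even (k + 3*x) := by
          rcases ho with ⟨j, hj⟩; rcases hx with ⟨i, hi⟩
          exact ⟨j + 3*i + 2, by rw [hj, hi]; ring⟩
        obtain ⟨m, hm⟩ := hxk
        exact ⟨m + 3*2^q, by linear_combination hk + 2^(q+3) * hm⟩

theorem stmt_11 (r : ℕ) (hr : 6 ≤ r) :
    ∃ a : ℤ, 1 ≤ a ∧ a ≤ 2 ^ r - 3 ∧
      3 * (a + 2) ^ 2 + 5 ≡ 0 [ZMOD (2 ^ r)] ∧
      (a + 4) ^ 3 + (a + 4) ≡ a ^ 3 + a [ZMOD (2 ^ (r + 2))] := by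
  obtain ⟨s, rfl⟩ : ∃ s, r = s + 6 := ⟨r - 6, by omega⟩
  obtain ⟨x, hodd, k, hk⟩ := key_aux (s+6) (by omega)
  set N : ℤ := 2 ^ (s+6) with hN
  have hNpos : 0 < N := by positivity
  have h2s : (1:ℤ) ≤ 2^s := by exact_mod_cast Nat.one_le_two_pow
  have hN64 : (64:ℤ) ≤ N := by
    have : N = 64 * 2^s := by rw [hN]; ring
    nlinarith
  set a : ℤ := (x - 2) % N with ha
  have hdm := Int.mul_ediv_add_emod (x - 2) N
  set c : ℤ := (x - 2) / N with hc
  have hca : x - 2 - a = N * c := by rw [ha, hc]; linarith [Int.mul_ediv_add_emod (x-2) N]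
  -- a odd
  obtain ⟨i, hi⟩ := hodd
  have haodd : ∃ t : ℤ, a = 2*t + 1 := by
    refine ⟨i - 1 - 2^(s+5)*c, ?_⟩
    have : N = 2 * 2^(s+5) := by rw [hN]; ring
    linear_combination hi - hca - c * this
  obtain ⟨t, ht⟩ := haodd
  have ha0 : 0 ≤ a := Int.emod_nonneg _ (ne_of_gt hNpos)
  have haN : a < N := Int.emod_lt_of_pos _ hNpos
  -- divisibility for a
  have hdvd' : N ∣ 3 * (a + 2) ^ 2 + 5 := by
    refine ⟨k - 3*c*(x + a + 2), ?_⟩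
    linear_combination hk - 3*(x + a + 2)*hca
  refine ⟨a, by omega, ?_, ?_, ?_⟩
  · -- a ≤ N - 3
    by_contra h
    push_neg at h
    have hM : N = 2 * 2^(s+5) := by rw [hN]; ring
    have haeq : a = N - 1 := by
      have h1 : (1:ℤ) ≤ 2^(s+5) := by exact_mod_cast Nat.one_le_two_pow
      omega
    obtain ⟨u, hu⟩ := hdvd'
    have h8 : N ∣ 8 := by
      refine ⟨u - 3*N - 6, ?_⟩
      linear_combination hu - 3*(N+3+a)*haeq
    have := Int.le_of_dvd (by norm_num) h8
    omega
  · exact (Int.modEq_zero_iff_dvd).mpr hdvd'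
  · rw [Int.modEq_iff_dvd]
    obtain ⟨u, hu⟩ := hdvd'
    refine ⟨-u, ?_⟩
    have hpow : (2:ℤ)^(s+6+2) = 4 * N := by rw [hN]; ring
    rw [hpow]
    linear_combination -4*hu
end

section
/- Let n be a positive integer with n > 44, k = ⌈log₃ n⌉, and m = 2^r · t where r ≥ 2 is an integer and t ≥ 5 is odd, with n ≤ m < 3^k < 3n. Then there exist 1 ≤ a < b ≤ n such that b³ + b ≡ a³ + a (mod m). -/
/-!
Take `b = a + t`: then `b³ + b - (a³ + a) = t · (3a² + 3at + t² + 1)`, so it suffices to find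
`1 ≤ a ≤ 2^r` with `2^r ∣ 3a² + 3at + t² + 1`. Such an `a` exists by Hensel lifting, since the
quadratic has a root mod 2 at `a = 1` and its derivative `6a + 3t` is odd. The bound `b ≤ n`
comes from `3(2^r + t) ≤ 2^r t = m < 3^k < 3n`.
-/

lemma modEq_add_pow_three_add {a t d : ℕ} (h : d ∣ 3 * a ^ 2 + 3 * a * t + t ^ 2 + 1) :
    a ^ 3 + a ≡ (a + t) ^ 3 + (a + t) [MOD t * d] := by
  have hzero : 0 ≡ t * (3 * a ^ 2 + 3 * a * t + t ^ 2 + 1) [MOD t * d] :=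
    (Nat.modEq_zero_iff_dvd.mpr (mul_dvd_mul_left t h)).symm
  have hsplit : (a + t) ^ 3 + (a + t) = a ^ 3 + a + t * (3 * a ^ 2 + 3 * a * t + t ^ 2 + 1) := by
    ring
  simpa [hsplit] using hzero.add_left (a ^ 3 + a)

/-- Going from `a` to `a + 2^j` changes the quadratic by `2^j` times the odd number
`6a + 3t + 3·2^j`, so one of the two values is divisible by `2^(j+1)`. -/
lemma exists_two_pow_dvd_three_mul_sq_add {t : ℕ} (ht : Odd t) {j : ℕ} (hj : 1 ≤ j) :
    ∃ a, 1 ≤ a ∧ a ≤ 2 ^ j ∧ 2 ^ j ∣ 3 * a ^ 2 + 3 * a * t + t ^ 2 + 1 := by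
  obtain ⟨s, rfl⟩ := ht
  induction j, hj using Nat.le_induction with
  | base => exact ⟨1, le_rfl, by norm_num, ⟨2 * s ^ 2 + 5 * s + 4, by ring⟩⟩
  | succ j hj ih =>
    obtain ⟨a, ha1, ha2, w, hw⟩ := ih
    obtain ⟨c, hc⟩ : ∃ c, 2 ^ j = 2 * c := ⟨2 ^ (j - 1), by rw [← pow_succ']; congr 1; omega⟩
    rcases Nat.even_or_odd w with ⟨w', hw'⟩ | ⟨w', hw'⟩
    · exact ⟨a, ha1, ha2.trans (Nat.pow_le_pow_right two_pos j.le_succ),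
        w', by rw [hw, hw', pow_succ]; ring⟩
    · refine ⟨a + 2 ^ j, by omega, by rw [pow_succ]; omega,
        w' + 3 * a + 3 * s + 3 * c + 2, ?_⟩
      have hstep : 3 * (a + 2 ^ j) ^ 2 + 3 * (a + 2 ^ j) * (2 * s + 1) + (2 * s + 1) ^ 2 + 1
          = (3 * a ^ 2 + 3 * a * (2 * s + 1) + (2 * s + 1) ^ 2 + 1)
            + 2 ^ j * (6 * a + 3 * (2 * s + 1) + 3 * 2 ^ j) := by
        ring
      rw [hstep, hw, hw', pow_succ, hc]
      ring

lemma three_mul_add_le_mul {x y : ℕ} (hx : 4 ≤ x) (hy : 5 ≤ y) (hxy : 44 < x * y) :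
    3 * (x + y) ≤ x * y := by
  rcases Nat.lt_or_ge x 8 with hx8 | hx8
  · interval_cases x <;> omega
  · nlinarith

theorem stmt_12_general (n k m r t : ℕ) (hn : 44 < n)
    (hr : 2 ≤ r) (ht : 5 ≤ t) (htodd : Odd t)
    (hm : m = 2 ^ r * t) (h1 : n ≤ m) (h2 : m < 3 ^ k) (h3 : 3 ^ k < 3 * n) :
    ∃ a b : ℕ, 1 ≤ a ∧ a < b ∧ b ≤ n ∧ a ^ 3 + a ≡ b ^ 3 + b [MOD m] := by
  have hfour : 4 ≤ 2 ^ r := by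
    simpa using Nat.pow_le_pow_right two_pos hr
  have hsize : 3 * (2 ^ r + t) ≤ m :=
    hm ▸ three_mul_add_le_mul hfour ht (by omega)
  obtain ⟨a, ha1, ha2, hdvd⟩ := exists_two_pow_dvd_three_mul_sq_add htodd (by omega : 1 ≤ r)
  refine ⟨a, a + t, ha1, by omega, by omega, ?_⟩
  rw [hm, mul_comm]
  exact modEq_add_pow_three_add hdvd

theorem stmt_12 (n k m r t : ℕ) (hn : 44 < n) (hk : k = ⌈Real.logb 3 n⌉₊)
    (hr : 2 ≤ r) (ht : 5 ≤ t) (htodd : Odd t)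
    (hm : m = 2 ^ r * t) (h1 : n ≤ m) (h2 : m < 3 ^ k) (h3 : 3 ^ k < 3 * n) :
    ∃ a b : ℕ, 1 ≤ a ∧ a < b ∧ b ≤ n ∧ a ^ 3 + a ≡ b ^ 3 + b [MOD m] :=
  stmt_12_general n k m r t hn hr ht htodd hm h1 h2 h3
end

section
/- Let n be a positive integer, k = ⌈log₃ n⌉, and m = 2^r · 3^s with r, s positive integers satisfying n ≤ m < 3^k < 3n. Then there exist 1 ≤ a < b ≤ n such that b³ + b ≡ a³ + a (mod m). -/
-- Hensel-style lifting: a solution of 3a²+3ac+c²+1 ≡ 0 mod 2^r exists in each parity class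
lemma keyA (c : ℕ) (hc : c % 2 = 1) (p : ℕ) :
    ∀ r : ℕ, 1 ≤ r → ∃ a : ℕ, a < 2 ^ r ∧ a % 2 = p % 2 ∧
      2 ^ r ∣ (3 * a ^ 2 + 3 * a * c + c ^ 2 + 1) := by
  intro r
  induction r with
  | zero => omega
  | succ r ih =>
    intro _
    rcases Nat.eq_zero_or_pos r with hr0 | hrpos
    · subst hr0
      obtain ⟨j, rfl⟩ : ∃ j, c = 2 * j + 1 := ⟨c / 2, by omega⟩
      rcases Nat.eq_zero_or_pos (p % 2) with hp | hp
      · exact ⟨0, by norm_num, by omega, ⟨2 * j ^ 2 + 2 * j + 1, by ring⟩⟩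
      · exact ⟨1, by norm_num, by omega, ⟨2 * j ^ 2 + 5 * j + 4, by ring⟩⟩
    · obtain ⟨a, ha1, ha2, t, ht⟩ := ih hrpos
      have h2r : 2 ∣ 2 ^ r := dvd_pow_self 2 (by omega)
      rcases Nat.even_or_odd t with ⟨w, hw⟩ | ⟨w, hw⟩
      · exact ⟨a, lt_of_lt_of_le ha1 (Nat.pow_le_pow_right (by norm_num) (by omega)), ha2,
          ⟨w, by rw [ht, hw]; ring⟩⟩
      · refine ⟨a + 2 ^ r, ?_, ?_, ?_⟩
        · have : 2 ^ (r + 1) = 2 ^ r + 2 ^ r := by ring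
          omega
        · omega
        · have key : 3 * (a + 2 ^ r) ^ 2 + 3 * (a + 2 ^ r) * c + c ^ 2 + 1
              = 2 ^ r * (t + 3 * (2 * a + 2 ^ r + c)) := by
            rw [show (3 * (a + 2 ^ r) ^ 2 + 3 * (a + 2 ^ r) * c + c ^ 2 + 1)
              = (3 * a ^ 2 + 3 * a * c + c ^ 2 + 1) + 2 ^ r * (3 * (2 * a + 2 ^ r + c)) by ring,
              ht]; ring
          obtain ⟨e, he⟩ : 2 ∣ (t + 3 * (2 * a + 2 ^ r + c)) := by
            obtain ⟨x, hx⟩ := h2r; omega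
          exact ⟨e, by rw [key, he, pow_succ]; ring⟩

-- a positive even solution in [1, 2^r]
lemma keyA' (c : ℕ) (hc : c % 2 = 1) (r : ℕ) (hr : 1 ≤ r) :
    ∃ a : ℕ, 1 ≤ a ∧ a ≤ 2 ^ r ∧ a % 2 = 0 ∧
      2 ^ r ∣ (3 * a ^ 2 + 3 * a * c + c ^ 2 + 1) := by
  obtain ⟨u, hu1, hu2, hudvd⟩ := keyA c hc 0 r hr
  have h2r : 2 ∣ 2 ^ r := dvd_pow_self 2 (by omega)
  rcases Nat.eq_zero_or_pos u with h0 | hpos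
  · subst h0
    refine ⟨2 ^ r, Nat.one_le_two_pow, le_rfl, by obtain ⟨x, hx⟩ := h2r; omega, ?_⟩
    have key : 3 * (2 ^ r) ^ 2 + 3 * (2 ^ r) * c + c ^ 2 + 1
        = (3 * 0 ^ 2 + 3 * 0 * c + c ^ 2 + 1) + 2 ^ r * (3 * 2 ^ r + 3 * c) := by ring
    rw [key]
    exact dvd_add hudvd ⟨3 * 2 ^ r + 3 * c, rfl⟩
  · exact ⟨u, hpos, le_of_lt hu1, by omega, hudvd⟩

-- symmetry: if u+v+c ≡ 0 mod 2^r then Q(u) ≡ Q(v)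
lemma pairQ (r c u v : ℕ) (h : 2 ^ r ∣ (3 * u ^ 2 + 3 * u * c + c ^ 2 + 1))
    (huv : 2 ^ r ∣ (u + v + c)) : 2 ^ r ∣ (3 * v ^ 2 + 3 * v * c + c ^ 2 + 1) := by
  have h1 : (2 : ℤ) ^ r ∣ (3 * (u:ℤ) ^ 2 + 3 * u * c + c ^ 2 + 1) := by exact_mod_cast h
  have h2 : (2 : ℤ) ^ r ∣ ((u:ℤ) + v + c) := by exact_mod_cast huv
  have hZ : (2 : ℤ) ^ r ∣ (3 * (v:ℤ) ^ 2 + 3 * v * c + c ^ 2 + 1) := by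
    have key : (3 * (v:ℤ) ^ 2 + 3 * v * c + c ^ 2 + 1)
        = (3 * (u:ℤ) ^ 2 + 3 * u * c + c ^ 2 + 1) + 3 * ((v:ℤ) - u) * ((u:ℤ) + v + c) := by ring
    rw [key]
    exact dvd_add h1 (Dvd.dvd.mul_left h2 _)
  exact_mod_cast hZ

lemma finishUp (n m r c a : ℕ) (hm : m = 2 ^ r * c) (hc : 0 < c)
    (hdvd : 2 ^ r ∣ (3 * a ^ 2 + 3 * a * c + c ^ 2 + 1))
    (ha : 1 ≤ a) (hb : a + c ≤ n) :
    ∃ x y : ℕ, 1 ≤ x ∧ x < y ∧ y ≤ n ∧ x ^ 3 + x ≡ y ^ 3 + y [MOD m] := by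
  refine ⟨a, a + c, ha, by omega, hb, ?_⟩
  have hle : a ^ 3 + a ≤ (a + c) ^ 3 + (a + c) :=
    add_le_add (Nat.pow_le_pow_left (Nat.le_add_right a c) 3) (Nat.le_add_right a c)
  apply (Nat.modEq_iff_dvd' hle).mpr
  have heq : (a + c) ^ 3 + (a + c)
      = (a ^ 3 + a) + c * (3 * a ^ 2 + 3 * a * c + c ^ 2 + 1) := by ring
  have hsub : (a + c) ^ 3 + (a + c) - (a ^ 3 + a)
      = c * (3 * a ^ 2 + 3 * a * c + c ^ 2 + 1) := by omega
  rw [hsub, hm]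
  obtain ⟨t, ht⟩ := hdvd
  exact ⟨t, by rw [ht]; ring⟩

-- the hard subcase: s = 1 (c = 3), r ≥ 2, using only n > 2^r
lemma caseS1 (n m r : ℕ) (hr2 : 2 ≤ r) (hm : m = 2 ^ r * 3) (hn : 2 ^ r < n) :
    ∃ x y : ℕ, 1 ≤ x ∧ x < y ∧ y ≤ n ∧ x ^ 3 + x ≡ y ^ 3 + y [MOD m] := by
  have hx4 : 4 ≤ 2 ^ r := by
    calc (4:ℕ) = 2 ^ 2 := by norm_num
    _ ≤ 2 ^ r := Nat.pow_le_pow_right (by norm_num) hr2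
  obtain ⟨u, hu1, hu2, hu0, hudvd⟩ := keyA' 3 rfl r (by omega)
  have h2r : 2 ∣ 2 ^ r := dvd_pow_self 2 (by omega)
  -- partner v with u + v + 3 ≡ 0 mod 2^r
  have hwlt : (u + 3) % 2 ^ r < 2 ^ r := Nat.mod_lt _ (by positivity)
  set w := (u + 3) % 2 ^ r with hwdef
  set v := 2 ^ r - w with hvdef
  have hv1 : 1 ≤ v := by omega
  have hv2 : v ≤ 2 ^ r := by omega
  have hvsum : 2 ^ r ∣ (u + v + 3) := by
    have hdm := Nat.div_add_mod (u + 3) (2 ^ r)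
    refine ⟨(u + 3) / 2 ^ r + 1, ?_⟩
    rw [Nat.mul_add, Nat.mul_one]
    omega
  have hvdvd : 2 ^ r ∣ (3 * v ^ 2 + 3 * v * 3 + 3 ^ 2 + 1) := pairQ r 3 u v hudvd hvsum
  have hparity : v % 2 = 1 := by
    obtain ⟨y, hy⟩ := dvd_trans h2r hvsum
    omega
  have hsmall : (u ≤ 2 ^ r - 2) ∨ (v ≤ 2 ^ r - 2) := by
    by_contra h
    push_neg at h
    obtain ⟨hA, hB⟩ := h
    have hne : u ≠ v := by omega
    have h22 : u + v + 3 = 2 * 2 ^ r + 2 := by omega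
    have hd2 : (2 ^ r) ∣ (2 * 2 ^ r + 2) := by rw [← h22]; exact hvsum
    have : (2 ^ r) ∣ 2 := (Nat.dvd_add_right ⟨2, by ring⟩).mp hd2
    have := Nat.le_of_dvd (by norm_num) this
    omega
  rcases hsmall with hA | hB
  · exact finishUp n m r 3 u hm (by norm_num) hudvd hu1 (by omega)
  · exact finishUp n m r 3 v hm (by norm_num) hvdvd hv1 (by omega)

theorem stmt_13 (n k m r s : ℕ) (hn : 0 < n) (hk : k = ⌈Real.logb 3 n⌉₊)
    (hr : 0 < r) (hs : 0 < s)
    (hm : m = 2 ^ r * 3 ^ s) (h1 : n ≤ m) (h2 : m < 3 ^ k) (h3 : 3 ^ k < 3 * n) :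
    ∃ a b : ℕ, 1 ≤ a ∧ a < b ∧ b ≤ n ∧ a ^ 3 + a ≡ b ^ 3 + b [MOD m] := by
  have hc : (3 ^ s) % 2 = 1 := by
    rw [Nat.pow_mod]; norm_num
  have hcpos : 0 < 3 ^ s := by positivity
  have hsplit : 3 ^ s = 3 * 3 ^ (s - 1) := by
    rw [← pow_succ']
    congr 1; omega
  have hnbig : 2 ^ r * 3 ^ (s - 1) < n := by
    rw [hm, hsplit] at h2
    nlinarith
  rcases Nat.lt_or_ge r 2 with hr1 | hr2
  · -- r = 1
    have hr1' : r = 1 := by omega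
    subst hr1'
    obtain ⟨a, ha1, ha2, hadvd⟩ := keyA (3 ^ s) hc 1 1 le_rfl
    have ha' : a = 1 := by omega
    subst ha'
    have hks : s + 1 ≤ k := by
      by_contra h
      have : 3 ^ k ≤ 3 ^ s := Nat.pow_le_pow_right (by norm_num) (by omega)
      omega
    have h7 : 3 ^ (s + 1) ≤ 3 ^ k := Nat.pow_le_pow_right (by norm_num) hks
    have h8 : 3 ^ (s + 1) = 3 * 3 ^ s := by ring
    exact finishUp n m 1 (3 ^ s) 1 hm hcpos hadvd le_rfl (by omega)
  · rcases Nat.lt_or_ge s 2 with hs1 | hs2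
    · -- s = 1
      have hs1' : s = 1 := by omega
      subst hs1'
      have hm' : m = 2 ^ r * 3 := by rw [hm]; norm_num
      have hn2r : 2 ^ r < n := by simpa using hnbig
      exact caseS1 n m r hr2 hm' hn2r
    · -- s ≥ 2
      have hx4 : 4 ≤ 2 ^ r := by
        calc (4:ℕ) = 2 ^ 2 := by norm_num
        _ ≤ 2 ^ r := Nat.pow_le_pow_right (by norm_num) hr2
      have hy3 : 3 ≤ 3 ^ (s - 1) := by
        calc (3:ℕ) = 3 ^ 1 := by norm_num
        _ ≤ 3 ^ (s - 1) := Nat.pow_le_pow_right (by norm_num) (by omega)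
      have hbound : 2 ^ r + 3 ^ s ≤ n := by
        rw [hsplit]
        nlinarith
      obtain ⟨u, hu1, hu2, hu0, hudvd⟩ := keyA' (3 ^ s) hc r (by omega)
      exact finishUp n m r (3 ^ s) u hm hcpos hudvd hu1 (by omega)
end

section
/- Let s be a nonnegative integer and n = 3^{6s+5} + 1 or n = 3^{6s+5} + 2. Then the values a³ + a for 1 ≤ a ≤ n are pairwise distinct modulo 7 · 3^{6s+4}. -/
lemma zmod7_pow (s : ℕ) : (3 : ZMod 7) ^ (6 * s + 4) = 4 := by
  rw [pow_add, pow_mul]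
  have h6 : (3 : ZMod 7) ^ 6 = 1 := by decide
  rw [h6, one_pow, one_mul]
  decide

lemma key (s a b : ℕ) (hb : 1 ≤ b) (hba : b ≤ a) (han : a ≤ 3 * 3 ^ (6 * s + 4) + 2)
    (h : a ^ 3 + a ≡ b ^ 3 + b [MOD 7 * 3 ^ (6 * s + 4)]) : a = b := by
  have hd := (Nat.modEq_iff_dvd).mp h
  push_cast at hd
  have hfac : ((b:ℤ)^3 + b) - ((a:ℤ)^3 + a)
      = ((b:ℤ) - a) * ((b:ℤ)^2 + (b:ℤ) * a + (a:ℤ)^2 + 1) := by ring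
  have hQ : ¬ (3:ℤ) ∣ ((b:ℤ)^2 + (b:ℤ) * a + (a:ℤ)^2 + 1) := by
    intro hdvd
    have h0 : (((b:ℤ)^2 + (b:ℤ) * a + (a:ℤ)^2 + 1 : ℤ) : ZMod 3) = 0 :=
      (ZMod.intCast_zmod_eq_zero_iff_dvd _ 3).mpr hdvd
    push_cast at h0
    have H : ∀ x y : ZMod 3, x^2 + x * y + y^2 + 1 ≠ 0 := by decide
    exact H _ _ h0
  have h3 : ((3:ℤ) ^ (6 * s + 4)) ∣ ((b:ℤ) - a) := by
    apply Int.prime_three.pow_dvd_of_dvd_mul_right (n := 6 * s + 4) (b := (b:ℤ)^2 + (b:ℤ) * a + (a:ℤ)^2 + 1)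
    · exact hQ
    · rw [← hfac]
      exact dvd_trans ⟨7, by push_cast; ring⟩ hd
  obtain ⟨t, ht⟩ := h3
  have hKpos : (0:ℤ) < 3 ^ (6 * s + 4) := by positivity
  have haz : (a:ℤ) ≤ 3 * 3 ^ (6 * s + 4) + 2 := by exact_mod_cast han
  have hbz : (1:ℤ) ≤ (b:ℤ) := by exact_mod_cast hb
  have hbaz : (b:ℤ) ≤ (a:ℤ) := by exact_mod_cast hba
  have hK2 : (2:ℤ) ≤ 3 ^ (6 * s + 4) := by
    calc (2:ℤ) ≤ 3 ^ 1 := by norm_num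
    _ ≤ 3 ^ (6 * s + 4) := pow_le_pow_right₀ (by norm_num) (by omega)
  have ht0 : -3 ≤ t := by
    by_contra hc
    push_neg at hc
    have h4 : t ≤ -4 := by omega
    have hle := mul_le_mul_of_nonneg_left h4 (le_of_lt hKpos)
    rw [← ht] at hle
    nlinarith
  have ht3 : t ≤ 0 := by
    by_contra hc
    push_neg at hc
    have h1 : 1 ≤ t := hc
    have hle := mul_le_mul_of_nonneg_left h1 (le_of_lt hKpos)
    rw [← ht] at hle
    nlinarith
  -- mod 7 fact
  have h7 : a ^ 3 + a ≡ b ^ 3 + b [MOD 7] :=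
    Nat.ModEq.of_dvd ⟨3 ^ (6 * s + 4), rfl⟩ h
  have h7' : ((a : ZMod 7))^3 + a = ((b : ZMod 7))^3 + b := by
    have := (ZMod.natCast_eq_natCast_iff _ _ _).mpr h7
    push_cast at this
    exact this
  have htz := congrArg (Int.cast : ℤ → ZMod 7) ht
  push_cast at htz
  rw [zmod7_pow] at htz
  -- htz : (b : ZMod 7) - a = 4 * t
  interval_cases t
  · -- t = -3 : a = b + 3 * 3^k
    exfalso
    have hab : a = b + 3 * 3 ^ (6 * s + 4) := by
      have : (a:ℤ) = (b:ℤ) + 3 * 3 ^ (6 * s + 4) := by linarith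
      exact_mod_cast this
    have hb2 : b ≤ 2 := by omega
    have Hd : ∀ x y : ZMod 7, x^3 + x = y^3 + y → x - y = 12 → x = 1 ∨ x = 4 := by decide
    have hxy : (a : ZMod 7) - b = 12 := by
      push_cast at htz
      linear_combination -htz
    have hcases := Hd _ _ h7' hxy
    have hx : (a : ZMod 7) = ((b + 3 * 3 ^ (6 * s + 4) : ℕ) : ZMod 7) := by rw [hab]
    push_cast at hx
    rw [zmod7_pow] at hx
    interval_cases b
    · rw [hx] at hcases
      revert hcases; decide
    · rw [hx] at hcases
      revert hcases; decide
  · exfalso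
    have Hd : ∀ x y : ZMod 7, x^3 + x = y^3 + y → y - x ≠ -8 := by decide
    refine Hd _ _ h7' ?_
    push_cast at htz
    linear_combination htz
  · exfalso
    have Hd : ∀ x y : ZMod 7, x^3 + x = y^3 + y → y - x ≠ -4 := by decide
    refine Hd _ _ h7' ?_
    push_cast at htz
    linear_combination htz
  · have : (b:ℤ) = a := by linarith
    exact_mod_cast this.symm

theorem stmt_16 (s n : ℕ) (hn : n = 3 ^ (6 * s + 5) + 1 ∨ n = 3 ^ (6 * s + 5) + 2)
    (a b : ℕ) (ha : 1 ≤ a) (han : a ≤ n) (hb : 1 ≤ b) (hbn : b ≤ n)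
    (h : a ^ 3 + a ≡ b ^ 3 + b [MOD 7 * 3 ^ (6 * s + 4)]) : a = b := by
  have hn' : n ≤ 3 * 3 ^ (6 * s + 4) + 2 := by
    have : 3 ^ (6 * s + 5) = 3 * 3 ^ (6 * s + 4) := by
      rw [pow_succ]; ring
    rcases hn with rfl | rfl <;> omega
  rcases le_total b a with hba | hab
  · exact key s a b hb hba (le_trans han hn') h
  · exact (key s b a ha hab (le_trans hbn hn') h.symm).symm
end
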